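/- For a fixed index pair (i,j) ∈ S, and A a random matrix with independent standard Gaussian entries on positions S (zeros elsewhere) such that det is not identically zero on M_S: for all z ≥ 2, Prob{ |a_{ij} det(A_{(ij)}) / det(A)| ≥ z } ≤ 1/z. -/

import Mathlib

/-!
Changing only the entry `a_ij` to `x` turns `det A` into an affine function `b + x s c` of `x`,
with `s = ±1` and `c = det A_(ij)` independent of `x`. So, conditionally on the other entries, the
ratio is `x / (x + t)` with `x` standard Gaussian and `t` fixed. The event `|x / (x + t)| ≥ z`
confines `x` to the interval between `-z t / (z - 1)` and `-z t / (z + 1)`, of length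
`2 d / (z - 1)`, on which `|x| ≥ d = z |t| / (z + 1)`. Its probability is therefore at most
`2 d φ(d) / (z - 1) ≤ 1 / (2 (z - 1)) ≤ 1 / z`, because `d φ(d) ≤ e^{-1/2} / √(2π) < 1/4`.
-/

open MeasureTheory ProbabilityTheory Matrix

/-- The sparse matrix with support `S` built from the coordinates `g`. -/
noncomputable def matOf {n : ℕ} (S : Finset (Fin n × Fin n)) (g : S → ℝ) :
    Matrix (Fin n) (Fin n) ℝ :=
  Matrix.of fun i j => if h : (i, j) ∈ S then g ⟨(i, j), h⟩ else 0

/-- The product standard Gaussian measure on the coordinates indexed by `S`. -/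
noncomputable def gaussS {n : ℕ} (S : Finset (Fin n × Fin n)) : Measure (S → ℝ) :=
  Measure.pi fun _ => gaussianReal 0 1

section

open scoped ENNReal

theorem MeasureTheory.Measure.pi_le_of_forall_update_le {δ : Type*} [Fintype δ] [DecidableEq δ]
    {X : δ → Type*} [∀ i, MeasurableSpace (X i)] (μ : ∀ i, Measure (X i))
    [∀ i, IsProbabilityMeasure (μ i)] (k : δ) {E : Set (∀ i, X i)} (hE : MeasurableSet E)
    {ε : ℝ≥0∞} (h : ∀ x, μ k {y | Function.update x k y ∈ E} ≤ ε) :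
    Measure.pi μ E ≤ ε := by
  have := fun i => nonempty_of_isProbabilityMeasure (μ i)
  obtain ⟨x₀⟩ : Nonempty (∀ i, X i) := inferInstance
  have hf : Measurable (E.indicator (1 : (∀ i, X i) → ℝ≥0∞)) := measurable_one.indicator hE
  calc Measure.pi μ E = (∫⋯∫⁻_Finset.univ, E.indicator 1 ∂μ) x₀ := by
        rw [← lintegral_eq_lmarginal_univ, lintegral_indicator_one hE]
    _ = (∫⋯∫⁻_Finset.univ.erase k,
          (fun x ↦ ∫⁻ y, E.indicator 1 (Function.update x k y) ∂μ k) ∂μ) x₀ := by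
        rw [lmarginal_erase' _ hf (Finset.mem_univ k)]
    _ ≤ (∫⋯∫⁻_Finset.univ.erase k, (fun _ ↦ ε) ∂μ) x₀ := by
        refine lmarginal_mono (fun x ↦ ?_) x₀
        change ∫⁻ y, (Function.update x k ⁻¹' E).indicator 1 y ∂μ k ≤ ε
        rw [lintegral_indicator_one (measurable_update x hE)]
        exact h x
    _ = ε := by simp [lmarginal]

end

theorem Matrix.det_updateRow_update {n R : Type*} [Fintype n] [DecidableEq n] [CommRing R]
    (M : Matrix n n R) (i j : n) (x : R) :
    (M.updateRow i (Function.update (M i) j x)).det = M.det + (x - M i j) * M.adjugate j i := by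
  have hrow : Function.update (M i) j x = M i + (x - M i j) • Pi.single j 1 := by
    ext l
    rcases eq_or_ne l j with rfl | hl <;> simp [*]
  rw [hrow, det_updateRow_add, det_updateRow_smul, updateRow_eq_self, adjugate_apply]

section

open Real Set

theorem four_mul_exp_neg_half_le_sqrt_two_pi : 4 * exp (-1 / 2) ≤ √(2 * π) := by
  have he : 2.7182818283 < exp 1 := exp_one_gt_d9
  have hπ : 3.141592 < π := pi_gt_d6
  have hsq : exp (-1 / 2) ^ 2 = (exp 1)⁻¹ := by
    rw [← exp_nat_mul, ← exp_neg]; norm_num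
  refine le_sqrt_of_sq_le ?_
  rw [mul_pow, hsq, ← div_eq_mul_inv, div_le_iff₀ (exp_pos 1)]
  nlinarith

theorem mul_gaussianPDFReal_zero_one_le (d : ℝ) : d * gaussianPDFReal 0 1 d ≤ 1 / 4 := by
  have hd : d ≤ exp ((d ^ 2 - 1) / 2) := by
    nlinarith [add_one_le_exp ((d ^ 2 - 1) / 2), sq_nonneg (d - 1)]
  have hpeak : d * exp (-d ^ 2 / 2) ≤ exp (-1 / 2) :=
    calc d * exp (-d ^ 2 / 2) ≤ exp ((d ^ 2 - 1) / 2) * exp (-d ^ 2 / 2) := by gcongr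
      _ = exp (-1 / 2) := by rw [← exp_add]; ring_nf
  rw [gaussianPDFReal, NNReal.coe_one, mul_one, sub_zero, mul_left_comm, ← div_eq_inv_mul,
    div_le_iff₀ (by positivity)]
  linarith [four_mul_exp_neg_half_le_sqrt_two_pi]

theorem gaussianReal_le_of_forall_mem_uIcc {E : Set ℝ} {a b d : ℝ} (hd : 0 ≤ d)
    (hE : ∀ x ∈ E, x ∈ uIcc a b ∧ d ≤ |x|) :
    gaussianReal 0 1 E ≤ ENNReal.ofReal (gaussianPDFReal 0 1 d * |b - a|) := by
  have hpdf : ∀ x ∈ E, gaussianPDF 0 1 x ≤ ENNReal.ofReal (gaussianPDFReal 0 1 d) := by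
    intro x hx
    have : d ^ 2 ≤ x ^ 2 := by nlinarith [sq_abs x, (hE x hx).2]
    refine ENNReal.ofReal_le_ofReal ?_
    simp only [gaussianPDFReal, NNReal.coe_one, mul_one, sub_zero]
    gcongr
  calc gaussianReal 0 1 E = ∫⁻ x in E, gaussianPDF 0 1 x := gaussianReal_apply 0 one_ne_zero E
    _ ≤ ∫⁻ _ in E, ENNReal.ofReal (gaussianPDFReal 0 1 d) :=
        setLIntegral_mono measurable_const hpdf
    _ ≤ ENNReal.ofReal (gaussianPDFReal 0 1 d) * volume (uIcc a b) := by
        rw [setLIntegral_const]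
        gcongr
        exact fun x hx => (hE x hx).1
    _ = ENNReal.ofReal (gaussianPDFReal 0 1 d * |b - a|) := by
        rw [Real.volume_interval, ENNReal.ofReal_mul (gaussianPDFReal_nonneg 0 1 d)]

theorem mem_uIcc_and_le_abs_of_le_abs_div_add {x t z : ℝ} (hz : 1 < z)
    (hx : z ≤ |x / (x + t)|) :
    x ∈ uIcc (-(z * t) / (z - 1)) (-(z * t) / (z + 1)) ∧ z * |t| / (z + 1) ≤ |x| := by
  have hxt : x + t ≠ 0 := by
    rintro h
    rw [h, div_zero, abs_zero] at hx
    linarith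
  have hzx : z * |x + t| ≤ |x| := by
    rwa [abs_div, le_div_iff₀ (abs_pos.2 hxt)] at hx
  have htri : |t| ≤ |x + t| + |x| := by
    simpa using abs_sub (x + t) x
  refine ⟨?_, ?_⟩
  · have hsq : z ^ 2 * (x + t) ^ 2 ≤ x ^ 2 := by
      rw [← sq_abs x, ← sq_abs (x + t), ← mul_pow]
      exact pow_le_pow_left₀ (by positivity) hzx 2
    have hprod : ((z - 1) * x + z * t) * ((z + 1) * x + z * t) ≤ 0 := by nlinarith
    rw [mem_uIcc]
    rcases mul_nonpos_iff.1 hprod with ⟨h₁, h₂⟩ | ⟨h₁, h₂⟩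
    · exact Or.inl ⟨(div_le_iff₀ (by linarith)).2 (by linarith),
        (le_div_iff₀ (by linarith)).2 (by linarith)⟩
    · exact Or.inr ⟨(div_le_iff₀ (by linarith)).2 (by linarith),
        (le_div_iff₀ (by linarith)).2 (by linarith)⟩
  · rw [div_le_iff₀ (by linarith)]
    nlinarith [abs_nonneg (x + t)]

theorem gaussianReal_setOf_le_abs_div_add_le (t : ℝ) {z : ℝ} (hz : 2 ≤ z) :
    gaussianReal 0 1 {x | z ≤ |x / (x + t)|} ≤ ENNReal.ofReal (1 / z) := by
  set d := z * |t| / (z + 1)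
  have hlen : |-(z * t) / (z + 1) - -(z * t) / (z - 1)| = 2 * d / (z - 1) := by
    have hz₁ : z - 1 ≠ 0 := by linarith
    have hz₂ : z + 1 ≠ 0 := by linarith
    rw [div_sub_div _ _ hz₂ hz₁, abs_div, abs_of_pos (by nlinarith : 0 < (z + 1) * (z - 1))]
    rw [show -(z * t) * (z - 1) - (z + 1) * -(z * t) = 2 * z * t by ring, abs_mul,
      abs_mul, abs_two, abs_of_pos (by linarith : 0 < z)]
    simp only [d]
    field_simp
  calc gaussianReal 0 1 {x | z ≤ |x / (x + t)|}
      ≤ ENNReal.ofReal (gaussianPDFReal 0 1 d * (2 * d / (z - 1))) := by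
        rw [← hlen]
        exact gaussianReal_le_of_forall_mem_uIcc (by positivity)
          fun x hx => mem_uIcc_and_le_abs_of_le_abs_div_add (by linarith) hx
    _ ≤ ENNReal.ofReal (1 / z) := by
        refine ENNReal.ofReal_le_ofReal ?_
        have hz₁ : 0 < z - 1 := by linarith
        rw [mul_div_assoc', mul_left_comm, div_le_div_iff₀ hz₁ (by linarith)]
        nlinarith [mul_gaussianPDFReal_zero_one_le d]

theorem gaussianReal_setOf_le_abs_mul_div_affine_le (a b c : ℝ) {s z : ℝ} (hs : |s| = 1)
    (hz : 2 ≤ z) :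
    gaussianReal 0 1 {x | z ≤ |x * c / (b + (x - a) * (s * c))|} ≤ ENNReal.ofReal (1 / z) := by
  rcases eq_or_ne c 0 with rfl | hc
  · simp [show ¬z ≤ 0 by linarith]
  · have hs₀ : s ≠ 0 := by rintro rfl; simp at hs
    have hsc : s * c ≠ 0 := mul_ne_zero hs₀ hc
    have hset : {x | z ≤ |x * c / (b + (x - a) * (s * c))|} =
        {x | z ≤ |x / (x + (b / (s * c) - a))|} := by
      ext x
      have hden : b + (x - a) * (s * c) = (x + (b / (s * c) - a)) * (s * c) := by field_simp; ring
      rw [Set.mem_ofPred_eq, Set.mem_ofPred_eq, hden, abs_div, abs_div, abs_mul x,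
        abs_mul _ (s * c), abs_mul s, hs, one_mul, mul_div_mul_right _ _ (abs_ne_zero.2 hc)]
    rw [hset]
    exact gaussianReal_setOf_le_abs_div_add_le _ hz

end

theorem matOf_update {n : ℕ} (S : Finset (Fin n × Fin n)) (g : S → ℝ) {i j : Fin n}
    (hij : (i, j) ∈ S) (x : ℝ) :
    matOf S (Function.update g ⟨(i, j), hij⟩ x) =
      (matOf S g).updateRow i (Function.update (matOf S g i) j x) := by
  ext a b
  rcases eq_or_ne a i with rfl | ha
  · rcases eq_or_ne b j with rfl | hb
    · simp [matOf, hij]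
    · simp [matOf, hb, Function.update_apply]
  · simp [matOf, ha, Function.update_apply]

theorem continuous_matOf {n : ℕ} (S : Finset (Fin n × Fin n)) : Continuous (matOf S) := by
  refine continuous_pi fun a => continuous_pi fun b => ?_
  by_cases h : (a, b) ∈ S
  · simpa [matOf, h] using continuous_apply _
  · simpa [matOf, h] using continuous_const

theorem single_cofactor_ratio_tail_bound_general
    (n : ℕ) (S : Finset (Fin (n + 1) × Fin (n + 1)))
    (i j : Fin (n + 1)) (hij : (i, j) ∈ S) (z : ℝ) (hz : 2 ≤ z) :
    gaussS S {g | z ≤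
        |matOf S g i j *
          ((matOf S g).submatrix i.succAbove j.succAbove).det / (matOf S g).det|} ≤
      ENNReal.ofReal (1 / z) := by
  have hM := continuous_matOf S
  have hE : MeasurableSet {g | z ≤
      |matOf S g i j * ((matOf S g).submatrix i.succAbove j.succAbove).det / (matOf S g).det|} :=
    measurableSet_le measurable_const <| Measurable.abs <| Measurable.div
      (((continuous_apply_apply i j).comp hM).mul (hM.matrix_submatrix _ _).matrix_det).measurable
      hM.matrix_det.measurable
  refine Measure.pi_le_of_forall_update_le _ ⟨(i, j), hij⟩ hE fun g => ?_
  simp only [Set.mem_ofPred_eq, matOf_update, updateRow_self, Function.update_self,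
    submatrix_updateRow_succAbove, det_updateRow_update, adjugate_fin_succ_eq_det_submatrix]
  exact gaussianReal_setOf_le_abs_mul_div_affine_le _ _ _ (abs_neg_one_pow _) hz

/-- For a fixed `(i,j) ∈ S` and a random sparse Gaussian matrix (with `det` not identically
zero on `M_S`): for all `z ≥ 2`, `Prob{|a_{ij} det A_{(ij)} / det A| ≥ z} ≤ 1/z`. -/
theorem single_cofactor_ratio_tail_bound
    (n : ℕ) (S : Finset (Fin (n + 1) × Fin (n + 1)))
    (hS : ∃ g : S → ℝ, (matOf S g).det ≠ 0)
    (i j : Fin (n + 1)) (hij : (i, j) ∈ S) (z : ℝ) (hz : 2 ≤ z) :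
    gaussS S {g | z ≤
        |matOf S g i j *
          ((matOf S g).submatrix i.succAbove j.succAbove).det / (matOf S g).det|} ≤
      ENNReal.ofReal (1 / z) :=
  single_cofactor_ratio_tail_bound_general n S i j hij z hz
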